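/- arXiv:1808.07964 — 4 statements merged into one kernel-verified Lean document; each statement's English description precedes it below -/
import Mathlib

section
/- Let K, K1, K2, r1, r2 be nonnegative integers with K = K1 + K2, 0 ≤ r2 ≤ r1 ≤ K, K1 ≥ 1, and K2 ≥ 1. Then the sum over all integers s1, s2 with 0 ≤ s2 ≤ s1 of C(K1 - 1, s2)·C(K1 - s2, s1 - s2)·C(K2 - 1, r2 - s2)·C(K2 - r2 + s2, (r1 - r2) - (s1 - s2)) equals C(K - 2, r2)·C(K - r2, r1 - r2). -/
/-! Every summand factors as `C(K1-1, s2) C(K2-1, r2-s2)` times a term depending on `s1` only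
through `t = s1 - s2`. Summing over `s1` first, that term is a Vandermonde convolution
`∑ₜ C(K1-s2, t) C(K2-r2+s2, (r1-r2)-t) = C(K-r2, r1-r2)`, independent of `s2`; the remaining sum
over `s2` is Vandermonde again, `∑ C(K1-1, s2) C(K2-1, r2-s2) = C(K-2, r2)`. -/

/-- Binomial coefficient on integers, with the convention `C(a,b) = 0` for
`b < 0` or `b > a`. -/
def ch (a b : ℤ) : ℤ := if 0 ≤ b ∧ b ≤ a then (a.toNat).choose b.toNat else 0

open Function Finset

theorem finsum_comm_of_finite {α β M : Type*} [AddCommMonoid M] (f : α → β → M)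
    (hf : (support (uncurry f)).Finite) :
    ∑ᶠ a, ∑ᶠ b, f a b = ∑ᶠ b, ∑ᶠ a, f a b := by
  let e : β × α ≃ α × β := Equiv.prodComm β α
  calc ∑ᶠ a, ∑ᶠ b, f a b = ∑ᶠ p, uncurry f p := (finsum_curry _ hf).symm
    _ = ∑ᶠ q, uncurry f (e q) := (finsum_comp_equiv e).symm
    _ = ∑ᶠ b, ∑ᶠ a, f a b := finsum_curry _ (hf.preimage e.injective.injOn)

lemma ch_eq_zero {a b : ℤ} (h : ¬(0 ≤ b ∧ b ≤ a)) : ch a b = 0 := if_neg h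

lemma ch_ne_zero {a b : ℤ} (h : ch a b ≠ 0) : 0 ≤ b ∧ b ≤ a :=
  not_not.mp (mt ch_eq_zero h)

lemma ch_natCast (m k : ℕ) : ch m k = m.choose k := by
  unfold ch
  split_ifs with h
  · simp
  · rw [Nat.choose_eq_zero_of_lt (by omega), Nat.cast_zero]

theorem finsum_ch_mul_ch {m n : ℤ} (hm : 0 ≤ m) (hn : 0 ≤ n) (b : ℤ) :
    ∑ᶠ t, ch m t * ch n (b - t) = ch (m + n) b := by
  lift m to ℕ using hm
  lift n to ℕ using hn
  rcases lt_or_ge b 0 with hb | hb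
  · have hzero (t : ℤ) : ch m t * ch n (b - t) = 0 := by
      rcases lt_or_ge t 0 with ht | ht
      · rw [ch_eq_zero (by omega), zero_mul]
      · rw [ch_eq_zero (a := n) (by omega), mul_zero]
    rw [finsum_congr hzero, finsum_zero, ch_eq_zero (by omega)]
  lift b to ℕ using hb
  rw [finsum_eq_finsetSum_of_support_subset _ (s := (range (b + 1)).map Nat.castEmbedding),
    sum_map]
  · have hterm : ∀ k ∈ range (b + 1),
        ch m (Nat.castEmbedding k) * ch n (b - Nat.castEmbedding k)
          = ((m.choose k * n.choose (b - k) : ℕ) : ℤ) := by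
      intro k hk
      have hkb : k ≤ b := Nat.lt_succ_iff.mp (mem_range.mp hk)
      rw [Nat.castEmbedding_apply, ← Nat.cast_sub hkb, ch_natCast, ch_natCast, Nat.cast_mul]
    rw [sum_congr rfl hterm, ← Nat.cast_sum,
      ← Nat.sum_antidiagonal_eq_sum_range_succ fun i j => m.choose i * n.choose j,
      ← Nat.add_choose_eq, ← Nat.cast_add, ch_natCast]
  · intro t ht
    have h1 := ch_ne_zero (left_ne_zero_of_mul ht)
    have h2 := ch_ne_zero (right_ne_zero_of_mul ht)
    simp only [coe_map, coe_range, Set.mem_image, Set.mem_Iio, Nat.castEmbedding_apply]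
    exact ⟨t.toNat, by omega, by omega⟩

lemma ite_summand_eq (K1 K2 r1 r2 s1 s2 : ℤ) :
    (if 0 ≤ s2 ∧ s2 ≤ s1 then
        ch (K1 - 1) s2 * ch (K1 - s2) (s1 - s2) * ch (K2 - 1) (r2 - s2) *
          ch (K2 - r2 + s2) ((r1 - r2) - (s1 - s2))
      else 0) =
      ch (K1 - 1) s2 * ch (K2 - 1) (r2 - s2) *
        (ch (K1 - s2) (s1 - s2) * ch (K2 - r2 + s2) ((r1 - r2) - (s1 - s2))) := by
  split_ifs with h
  · ring
  · rcases not_and_or.mp h with h | h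
    · rw [ch_eq_zero (a := K1 - 1) (by omega)]; ring
    · rw [ch_eq_zero (a := K1 - s2) (by omega)]; ring

theorem stmt5_general (K K1 K2 r1 r2 : ℤ) (hK : K = K1 + K2) (hK1 : 1 ≤ K1) (hK2 : 1 ≤ K2) :
    (∑ᶠ s1 : ℤ, ∑ᶠ s2 : ℤ,
        if 0 ≤ s2 ∧ s2 ≤ s1 then
          ch (K1 - 1) s2 * ch (K1 - s2) (s1 - s2) * ch (K2 - 1) (r2 - s2) *
            ch (K2 - r2 + s2) ((r1 - r2) - (s1 - s2))
        else 0)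
      = ch (K - 2) r2 * ch (K - r2) (r1 - r2) := by
  set A : ℤ → ℤ := fun s2 => ch (K1 - 1) s2 * ch (K2 - 1) (r2 - s2)
  set B : ℤ → ℤ → ℤ := fun s2 t => ch (K1 - s2) t * ch (K2 - r2 + s2) ((r1 - r2) - t)
  have hfinite : (support (uncurry fun s1 s2 => A s2 * B s2 (s1 - s2))).Finite := by
    refine ((Set.finite_Icc 0 K1).prod (Set.finite_Icc 0 K1)).subset ?_
    rintro ⟨s1, s2⟩ h
    have h1 := ch_ne_zero (left_ne_zero_of_mul (left_ne_zero_of_mul h))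
    have h2 := ch_ne_zero (left_ne_zero_of_mul (right_ne_zero_of_mul h))
    simp only [Set.mem_prod, Set.mem_Icc]
    omega
  have hinner (s2 : ℤ) : A s2 * ∑ᶠ s1, B s2 (s1 - s2) = A s2 * ch (K - r2) (r1 - r2) := by
    rcases eq_or_ne (A s2) 0 with h | h
    · rw [h, zero_mul, zero_mul]
    have h1 := ch_ne_zero (left_ne_zero_of_mul h)
    have h2 := ch_ne_zero (right_ne_zero_of_mul h)
    rw [show ∑ᶠ s1, B s2 (s1 - s2) = ∑ᶠ t, B s2 t from
        finsum_comp_equiv (Equiv.subRight s2),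
      finsum_ch_mul_ch (by omega) (by omega)]
    congr 2
    omega
  calc _ = ∑ᶠ s1, ∑ᶠ s2, A s2 * B s2 (s1 - s2) := by simp only [ite_summand_eq]; rfl
    _ = ∑ᶠ s2, A s2 * ∑ᶠ s1, B s2 (s1 - s2) := by
      rw [finsum_comm_of_finite _ hfinite]
      simp only [mul_finsum]
    _ = (∑ᶠ s2, A s2) * ch (K - r2) (r1 - r2) := by rw [finsum_congr hinner, finsum_mul]
    _ = ch (K - 2) r2 * ch (K - r2) (r1 - r2) := by
      rw [finsum_ch_mul_ch (by omega) (by omega)]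
      congr 2
      omega

theorem stmt5 (K K1 K2 r1 r2 : ℤ) (hK : K = K1 + K2) (h0 : 0 ≤ r2)
    (h12 : r2 ≤ r1) (h1K : r1 ≤ K) (hK1 : 1 ≤ K1) (hK2 : 1 ≤ K2) :
    (∑ᶠ s1 : ℤ, ∑ᶠ s2 : ℤ,
        if 0 ≤ s2 ∧ s2 ≤ s1 then
          ch (K1 - 1) s2 * ch (K1 - s2) (s1 - s2) * ch (K2 - 1) (r2 - s2) *
            ch (K2 - r2 + s2) ((r1 - r2) - (s1 - s2))
        else 0)
      = ch (K - 2) r2 * ch (K - r2) (r1 - r2) :=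
  stmt5_general K K1 K2 r1 r2 hK hK1 hK2
end

section
/- Fix integers K ≥ 2 and i ≥ 1 with i ≤ K. Define c_n = C(K - i, n)/C(K, n) for n = 0, 1, ..., K (with C(a,b)=0 for b>a). Then the sequence c_n is convex, i.e., for all n with 0 ≤ n ≤ K - 2, c_{n+1} − c_n ≤ c_{n+2} − c_{n+1}. -/
/-!
Put `m = K - i` and `c n = C(m, n) / C(K, n)`. From `C(m, n + 1) (n + 1) = C(m, n) (m - n)`
we get `c (n + 1) = c n * r n` with
`r n = (m - n) / (K - n)`, so with `a = m - n` and `A = K - n` the inequality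
`c (n + 1) - c n ≤ c (n + 2) - c (n + 1)` reduces, after dividing by `c n ≥ 0`, to
`A (A - 1) - 2 a (A - 1) + a (a - 1) ≥ 0`. The left side is `(A - a) (A - a - 1) = i (i - 1)`,
a product of two consecutive integers.
-/

/-- Unlike `Nat.choose_succ_right_eq`, the factor `m - n` is taken in the ring, so the identity
holds without truncated subtraction (for `n > m` both sides vanish). -/
theorem cast_choose_succ_mul {R : Type*} [CommRing R] (m n : ℕ) :
    (m.choose (n + 1) : R) * (n + 1) = m.choose n * ((m : R) - n) := by
  rcases le_or_gt n m with hnm | hmn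
  · have h := congrArg (Nat.cast (R := R)) (Nat.choose_succ_right_eq m n)
    push_cast [Nat.cast_sub hnm] at h
    exact h
  · simp [Nat.choose_eq_zero_of_lt hmn, Nat.choose_eq_zero_of_lt (hmn.trans (Nat.lt_succ_self n))]

theorem choose_div_choose_succ (m K n : ℕ) (hn : n < K) :
    (m.choose (n + 1) : ℚ) / K.choose (n + 1)
      = m.choose n / K.choose n * (((m : ℚ) - n) / ((K : ℚ) - n)) := by
  have hKn : (0 : ℚ) < K.choose n := by exact_mod_cast Nat.choose_pos hn.le
  have hKn1 : (0 : ℚ) < K.choose (n + 1) := by exact_mod_cast Nat.choose_pos hn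
  have hAn : (0 : ℚ) < (K : ℚ) - n := sub_pos.mpr (by exact_mod_cast hn)
  have hm := cast_choose_succ_mul (R := ℚ) m n
  have hK := cast_choose_succ_mul (R := ℚ) K n
  rw [div_mul_div_comm, div_eq_div_iff hKn1.ne' (by positivity)]
  refine mul_right_cancel₀ (n.cast_add_one_ne_zero (R := ℚ)) ?_
  linear_combination (↑(K.choose n) * ((K : ℚ) - n)) * hm - (↑(m.choose n) * ((m : ℚ) - n)) * hK

theorem Int.mul_sub_one_nonneg (d : ℤ) : 0 ≤ d * (d - 1) := by
  rcases le_or_gt d 0 with h | h <;> nlinarith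

theorem convex_step {c a A : ℚ} (hc : 0 ≤ c) (hA : 1 < A) (hgap : 0 ≤ (A - a) * (A - a - 1)) :
    c * (a / A) - c ≤ c * (a / A) * ((a - 1) / (A - 1)) - c * (a / A) := by
  have hA0 : 0 < A := zero_lt_one.trans hA
  have hA1 : 0 < A - 1 := sub_pos.mpr hA
  have key : 0 ≤ 1 - 2 * (a / A) + (a / A) * ((a - 1) / (A - 1)) := by
    have : 1 - 2 * (a / A) + (a / A) * ((a - 1) / (A - 1)) = (A - a) * (A - a - 1) / (A * (A - 1)) := by
      field_simp
      ring
    rw [this]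
    positivity
  nlinarith [mul_nonneg hc key]

theorem choose_div_choose_convex (m K n : ℕ) (hn : n + 2 ≤ K) :
    (m.choose (n + 1) : ℚ) / K.choose (n + 1) - m.choose n / K.choose n
      ≤ (m.choose (n + 2) : ℚ) / K.choose (n + 2) - m.choose (n + 1) / K.choose (n + 1) := by
  have hgap : (0 : ℚ) ≤ (((K : ℚ) - n) - ((m : ℚ) - n)) * (((K : ℚ) - n) - ((m : ℚ) - n) - 1) := by
    have := Int.mul_sub_one_nonneg ((K : ℤ) - m)
    have hq : (0 : ℚ) ≤ (((K : ℤ) - m) * ((K : ℤ) - m - 1) : ℤ) := by exact_mod_cast this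
    push_cast at hq
    linarith
  have hA : (1 : ℚ) < (K : ℚ) - n := by
    have : ((n + 2 : ℕ) : ℚ) ≤ K := by exact_mod_cast hn
    push_cast at this
    linarith
  rw [choose_div_choose_succ m K (n + 1) (by omega), choose_div_choose_succ m K n (by omega)]
  push_cast
  rw [show (m : ℚ) - (n + 1) = (m : ℚ) - n - 1 by ring, show (K : ℚ) - (n + 1) = (K : ℚ) - n - 1 by ring]
  exact convex_step (by positivity) hA hgap

theorem stmt13_general (K i : ℕ) (hK : 2 ≤ K) :
    ∀ n, n ≤ K - 2 →
      ((K - i).choose (n + 1) : ℚ) / (K.choose (n + 1))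
          - ((K - i).choose n : ℚ) / (K.choose n)
        ≤ ((K - i).choose (n + 2) : ℚ) / (K.choose (n + 2))
          - ((K - i).choose (n + 1) : ℚ) / (K.choose (n + 1)) :=
  fun n hn => choose_div_choose_convex (K - i) K n (by omega)

theorem stmt13 (K i : ℕ) (hK : 2 ≤ K) (hi1 : 1 ≤ i) (hi2 : i ≤ K) :
    ∀ n, n ≤ K - 2 →
      ((K - i).choose (n + 1) : ℚ) / (K.choose (n + 1))
          - ((K - i).choose n : ℚ) / (K.choose n)
        ≤ ((K - i).choose (n + 2) : ℚ) / (K.choose (n + 2))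
          - ((K - i).choose (n + 1) : ℚ) / (K.choose (n + 1)) :=
  stmt13_general K i hK
end

section
/- Fix integers K ≥ 1 and 1 ≤ i ≤ K. Let a_0, ..., a_K be nonnegative reals with sum 1 and let t = Σ_{n=0}^K n·a_n. Then Σ_{n=0}^K a_n · C(K-i, n)/C(K, n) ≥ (1 − t + ⌊t⌋)·C(K-i, ⌊t⌋)/C(K, ⌊t⌋) + (t − ⌊t⌋)·C(K-i, ⌊t⌋+1)/C(K, ⌊t⌋+1), where the second term is interpreted as 0 if t = K. -/
/-!
By `C(K, n) C(K - n, i) = C(K, i) C(K - i, n)`, the sequence `c n = C(K - i, n) / C(K, n)` equals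
`C(K - n, i) / C(K, i)`, whose increments `-C(K - n - 1, i - 1) / C(K, i)` increase with `n`.
A sequence with increasing increments lies above every line through two consecutive values:
`c n ≥ c m + (n - m) (c (m + 1) - c m)`. Averaging this against the weights `a n` with
`m = ⌊t⌋` gives the bound.
-/

open Finset

theorem Nat.choose_mul_choose_tsub_comm (K n i : ℕ) :
    K.choose n * (K - n).choose i = K.choose i * (K - i).choose n := by
  have hn := Nat.choose_mul (n := K) (k := n + i) (Nat.le_add_right n i)
  have hi := Nat.choose_mul (n := K) (k := n + i) (Nat.le_add_left i n)
  rw [Nat.add_sub_cancel_left] at hn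
  rw [Nat.add_sub_cancel] at hi
  rw [← hn, ← hi, Nat.choose_symm_add]

theorem cast_choose_tsub_div_choose {K i : ℕ} (hi1 : 1 ≤ i) (hi2 : i ≤ K) (n : ℕ) :
    ((K - i).choose n : ℝ) / K.choose n = ((K - n).choose i : ℝ) / K.choose i := by
  rcases le_or_gt n K with hn | hn
  · rw [div_eq_div_iff (by positivity [Nat.choose_pos hn]) (by positivity [Nat.choose_pos hi2])]
    norm_cast
    linarith [Nat.choose_mul_choose_tsub_comm K n i]
  · -- `0 / 0` on the left, `C(0, i) / C(K, i)` on the right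
    simp [Nat.choose_eq_zero_of_lt hn, Nat.sub_eq_zero_of_le hn.le,
      Nat.choose_eq_zero_of_lt (show 0 < i by omega)]

theorem monotone_cast_choose_succ_sub (i : ℕ) :
    Monotone fun m : ℕ => ((m + 1).choose i : ℝ) - m.choose i := by
  cases i with
  | zero => simp [monotone_const]
  | succ j =>
    simp only [Nat.choose_succ_succ', Nat.cast_add, add_sub_cancel_right]
    exact fun _ _ hab => Nat.cast_le.2 (Nat.choose_le_choose j hab)

theorem monotone_comp_tsub_sub {h : ℕ → ℝ} (hmono : Monotone h)
    (hconv : Monotone fun m => h (m + 1) - h m) (K : ℕ) :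
    Monotone fun n => h (K - (n + 1)) - h (K - n) := by
  refine monotone_nat_of_le_succ fun n => ?_
  rcases lt_or_ge (n + 1) K with hn | hn
  · obtain ⟨m, rfl⟩ := Nat.exists_eq_add_of_lt hn
    have := hconv (Nat.le_succ m)
    rw [show n + 1 + m + 1 - (n + 1) = m + 1 by omega, show n + 1 + m + 1 - n = m + 1 + 1 by omega,
      show n + 1 + m + 1 - (n + 1 + 1) = m by omega]
    linarith
  · -- at the kink `n + 1 = K`, where the sequence becomes constant, convexity needs `h` monotone
    rw [Nat.sub_eq_zero_of_le hn, Nat.sub_eq_zero_of_le (by omega : K ≤ n + 1 + 1), sub_self]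
    exact sub_nonpos.2 (hmono (Nat.zero_le _))

theorem monotone_cast_choose_tsub_div_choose_sub {K i : ℕ} (hi1 : 1 ≤ i) (hi2 : i ≤ K) :
    Monotone fun n : ℕ => ((K - i).choose (n + 1) : ℝ) / K.choose (n + 1) -
      ((K - i).choose n : ℝ) / K.choose n := by
  simp only [cast_choose_tsub_div_choose hi1 hi2, ← sub_div]
  exact (monotone_comp_tsub_sub (h := fun m => (m.choose i : ℝ))
    (fun _ _ hab => Nat.cast_le.2 (Nat.choose_le_choose i hab))
    (monotone_cast_choose_succ_sub i) K).div_const (Nat.cast_nonneg _)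

theorem add_mul_sub_le_of_monotone_sub {f : ℕ → ℝ} (hf : Monotone fun n => f (n + 1) - f n)
    (m n : ℕ) : f m + ((n : ℝ) - m) * (f (m + 1) - f m) ≤ f n := by
  rcases le_total m n with hmn | hnm
  · have : #(Ico m n) • (f (m + 1) - f m) ≤ f n - f m := by
      rw [← sum_Ico_sub f hmn]
      exact card_nsmul_le_sum _ _ _ fun k hk => hf (mem_Ico.1 hk).1
    rw [nsmul_eq_mul, Nat.card_Ico, Nat.cast_sub hmn] at this
    linarith
  · have : f m - f n ≤ #(Ico n m) • (f (m + 1) - f m) := by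
      rw [← sum_Ico_sub f hnm]
      exact sum_le_card_nsmul _ _ _ fun k hk => hf (mem_Ico.1 hk).2.le
    rw [nsmul_eq_mul, Nat.card_Ico, Nat.cast_sub hnm] at this
    linarith

theorem add_mul_sub_le_sum_of_monotone_sub {ι : Type*} (s : Finset ι) {f : ℕ → ℝ}
    (hf : Monotone fun n => f (n + 1) - f n) {w : ι → ℝ} (hw : ∀ j ∈ s, 0 ≤ w j)
    (hw1 : ∑ j ∈ s, w j = 1) (x : ι → ℕ) (m : ℕ) :
    (1 - ∑ j ∈ s, (x j : ℝ) * w j + m) * f m + (∑ j ∈ s, (x j : ℝ) * w j - m) * f (m + 1) ≤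
      ∑ j ∈ s, w j * f (x j) :=
  calc _ = ∑ j ∈ s, ((f m - m * (f (m + 1) - f m)) * w j + (f (m + 1) - f m) * (x j * w j)) := by
        rw [sum_add_distrib, ← mul_sum, ← mul_sum, hw1]; ring
    _ ≤ ∑ j ∈ s, w j * f (x j) := sum_le_sum fun j hj => by
        linear_combination
          mul_le_mul_of_nonneg_left (add_mul_sub_le_of_monotone_sub hf m (x j)) (hw j hj)

theorem stmt14_general (K i : ℕ) (hi1 : 1 ≤ i) (hi2 : i ≤ K)
    (a : Fin (K + 1) → ℝ) (hnn : ∀ n, 0 ≤ a n) (hsum : ∑ n, a n = 1) :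
    (∑ n : Fin (K + 1), a n * (((K - i).choose (n : ℕ) : ℝ) / (K.choose (n : ℕ))))
      ≥ (1 - (∑ n : Fin (K + 1), (n : ℝ) * a n)
            + (⌊∑ n : Fin (K + 1), (n : ℝ) * a n⌋ : ℝ)) *
          (((K - i).choose (⌊∑ n : Fin (K + 1), (n : ℝ) * a n⌋.toNat) : ℝ) /
            (K.choose (⌊∑ n : Fin (K + 1), (n : ℝ) * a n⌋.toNat)))
        + ((∑ n : Fin (K + 1), (n : ℝ) * a n)
            - (⌊∑ n : Fin (K + 1), (n : ℝ) * a n⌋ : ℝ)) *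
          (((K - i).choose (⌊∑ n : Fin (K + 1), (n : ℝ) * a n⌋.toNat + 1) : ℝ) /
            (K.choose (⌊∑ n : Fin (K + 1), (n : ℝ) * a n⌋.toNat + 1))) := by
  have ht : 0 ≤ ∑ n : Fin (K + 1), (n : ℝ) * a n :=
    sum_nonneg fun n _ => mul_nonneg (Nat.cast_nonneg _) (hnn n)
  rw [← Int.toNat_of_nonneg (Int.floor_nonneg.2 ht), Int.cast_natCast]
  exact add_mul_sub_le_sum_of_monotone_sub univ (f := fun n => ((K - i).choose n : ℝ) / K.choose n)
    (monotone_cast_choose_tsub_div_choose_sub hi1 hi2) (fun n _ => hnn n) hsum (fun n => n) _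

theorem stmt14 (K i : ℕ) (hK : 1 ≤ K) (hi1 : 1 ≤ i) (hi2 : i ≤ K)
    (a : Fin (K + 1) → ℝ) (hnn : ∀ n, 0 ≤ a n) (hsum : ∑ n, a n = 1) :
    (∑ n : Fin (K + 1), a n * (((K - i).choose (n : ℕ) : ℝ) / (K.choose (n : ℕ))))
      ≥ (1 - (∑ n : Fin (K + 1), (n : ℝ) * a n)
            + (⌊∑ n : Fin (K + 1), (n : ℝ) * a n⌋ : ℝ)) *
          (((K - i).choose (⌊∑ n : Fin (K + 1), (n : ℝ) * a n⌋.toNat) : ℝ) /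
            (K.choose (⌊∑ n : Fin (K + 1), (n : ℝ) * a n⌋.toNat)))
        + ((∑ n : Fin (K + 1), (n : ℝ) * a n)
            - (⌊∑ n : Fin (K + 1), (n : ℝ) * a n⌋ : ℝ)) *
          (((K - i).choose (⌊∑ n : Fin (K + 1), (n : ℝ) * a n⌋.toNat + 1) : ℝ) /
            (K.choose (⌊∑ n : Fin (K + 1), (n : ℝ) * a n⌋.toNat + 1))) :=
  stmt14_general K i hi1 hi2 a hnn hsum
end

section
/- Fix an integer K ≥ 2 and i ∈ {1, 2}. Define J : [0, K] → ℝ by J(x) = (1 − x + ⌊x⌋)·C(K-i,⌊x⌋)/C(K,⌊x⌋) + (x − ⌊x⌋)·C(K-i,⌊x⌋+1)/C(K,⌊x⌋+1) for x ∈ [0, K) and J(K) = C(K-i,K)/C(K,K). Then J is a convex function on [0, K]. -/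
/-!
On each interval `[n, n + 1]` the interpolation `J` of a sequence `c` agrees with the chord
`L n` through `(n, c n)` and `(n + 1, c (n + 1))`, and consecutive chords differ by
`L (k + 1) x - L k x = Δ²c k * (x - (k + 1))`. Telescoping, on `[0, N]`
`J x = L 0 x + ∑_{k < N - 1} Δ²c k * max (x - (k + 1)) 0`,
an affine function plus a nonnegative combination of hinges when `c` is convex.

For `n ≤ K` the sequence `C(K - i, n) / C(K, n)` equals `C(K - n, i) / C(K, i)` (both count an
`n`-set and a disjoint `i`-set), and `m ↦ C(m, i)` is convex because its increments
`C(m, i - 1)` increase.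
-/

open Finset

theorem convexOn_finset_sum {𝕜 E β ι : Type*} [Semiring 𝕜] [PartialOrder 𝕜] [AddCommMonoid E]
    [AddCommMonoid β] [PartialOrder β] [IsOrderedAddMonoid β] [SMul 𝕜 E] [Module 𝕜 β]
    {s : Set E} (hs : Convex 𝕜 s) {t : Finset ι} {f : ι → E → β}
    (hf : ∀ i ∈ t, ConvexOn 𝕜 s (f i)) : ConvexOn 𝕜 s fun x => ∑ i ∈ t, f i x := by
  classical
  induction t using Finset.induction_on with
  | empty => simpa using convexOn_const (0 : β) hs
  | insert a t ha ih =>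
    simp only [sum_insert ha]
    exact (hf a (mem_insert_self a t)).add (ih fun i hi => hf i (mem_insert_of_mem hi))

theorem convexOn_max_sub_zero {s : Set ℝ} (hs : Convex ℝ s) (a : ℝ) :
    ConvexOn ℝ s fun x => max (x - a) 0 :=
  ((convexOn_id hs).add_const (-a)).sup (convexOn_const 0 hs) |>.congr fun x _ => by
    simp [sub_eq_add_neg]

noncomputable def linearInterpolation (c : ℕ → ℝ) (x : ℝ) : ℝ :=
  (1 - x + ⌊x⌋) * c ⌊x⌋.toNat + (x - ⌊x⌋) * c (⌊x⌋.toNat + 1)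

def chord (c : ℕ → ℝ) (n : ℕ) (x : ℝ) : ℝ :=
  c n + (c (n + 1) - c n) * (x - n)

section Interpolation

variable (c : ℕ → ℝ)

theorem convexOn_chord {s : Set ℝ} (hs : Convex ℝ s) (n : ℕ) : ConvexOn ℝ s (chord c n) := by
  refine ⟨hs, fun x _ y _ a b _ _ hab => le_of_eq ?_⟩
  simp only [chord, smul_eq_mul]
  linear_combination (c (n + 1) * n - c n * n - c n) * hab

theorem chord_succ_sub_chord (k : ℕ) (x : ℝ) :
    chord c (k + 1) x - chord c k x = (c k + c (k + 2) - 2 * c (k + 1)) * (x - (k + 1)) := by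
  simp only [chord]
  push_cast
  ring

theorem chord_eq_chord_zero_add_sum (n : ℕ) (x : ℝ) :
    chord c n x =
      chord c 0 x + ∑ k ∈ range n, (c k + c (k + 2) - 2 * c (k + 1)) * (x - (k + 1)) := by
  rw [sum_congr rfl fun k _ => (chord_succ_sub_chord c k x).symm,
    sum_range_sub fun k => chord c k x]
  ring

theorem linearInterpolation_eq_chord {n : ℕ} {x : ℝ} (h₀ : n ≤ x) (h₁ : x ≤ n + 1) :
    linearInterpolation c x = chord c n x := by
  rcases h₁.lt_or_eq with h₁ | rfl
  · have hfloor : ⌊x⌋ = n := Int.floor_eq_iff.2 ⟨by exact_mod_cast h₀, by exact_mod_cast h₁⟩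
    simp only [linearInterpolation, chord, hfloor, Int.cast_natCast, Int.toNat_natCast]
    ring
  · have hfloor : ⌊(n : ℝ) + 1⌋ = (n + 1 : ℕ) := by
      exact_mod_cast Int.floor_natCast (R := ℝ) (n + 1)
    simp only [linearInterpolation, chord, hfloor, Int.cast_natCast, Int.toNat_natCast]
    push_cast
    ring

theorem sum_mul_max_sub_zero_eq {d : ℕ → ℝ} {n M : ℕ} (hnM : n ≤ M) {x : ℝ} (h₀ : n ≤ x)
    (h₁ : x ≤ n + 1) :
    ∑ k ∈ range M, d k * max (x - (k + 1)) 0 = ∑ k ∈ range n, d k * (x - (k + 1)) := by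
  rw [← sum_range_add_sum_Ico _ hnM]
  have active : ∀ k ∈ range n, d k * max (x - (k + 1)) 0 = d k * (x - (k + 1)) := by
    intro k hk
    have : (k : ℝ) + 1 ≤ n := by exact_mod_cast mem_range.1 hk
    rw [max_eq_left (by linarith)]
  have inactive : ∀ k ∈ Ico n M, d k * max (x - (k + 1)) 0 = 0 := by
    intro k hk
    have : (n : ℝ) ≤ k := by exact_mod_cast (mem_Ico.1 hk).1
    rw [max_eq_right (by linarith), mul_zero]
  rw [sum_congr rfl active, sum_eq_zero inactive, add_zero]

theorem exists_nat_le_le_add_one_of_mem_Icc {N : ℕ} {x : ℝ} (hx : x ∈ Set.Icc (0 : ℝ) N) :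
    ∃ n : ℕ, n ≤ N - 1 ∧ (n : ℝ) ≤ x ∧ x ≤ n + 1 := by
  by_cases hfloor : ⌊x⌋₊ ≤ N - 1
  · exact ⟨⌊x⌋₊, hfloor, Nat.floor_le hx.1, (Nat.lt_floor_add_one x).le⟩
  · have hN : 1 ≤ N := by
      have := Nat.floor_le_of_le hx.2
      omega
    refine ⟨N - 1, le_rfl, ?_, ?_⟩
    · calc ((N - 1 : ℕ) : ℝ) ≤ ⌊x⌋₊ := by exact_mod_cast (not_le.1 hfloor).le
        _ ≤ x := Nat.floor_le hx.1
    · rw [Nat.cast_sub hN, Nat.cast_one, sub_add_cancel]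
      exact hx.2

theorem linearInterpolation_eq_chord_zero_add_sum {N : ℕ} {x : ℝ}
    (hx : x ∈ Set.Icc (0 : ℝ) N) :
    linearInterpolation c x =
      chord c 0 x +
        ∑ k ∈ range (N - 1), (c k + c (k + 2) - 2 * c (k + 1)) * max (x - (k + 1)) 0 := by
  obtain ⟨n, hnN, h₀, h₁⟩ := exists_nat_le_le_add_one_of_mem_Icc hx
  rw [linearInterpolation_eq_chord c h₀ h₁, chord_eq_chord_zero_add_sum,
    sum_mul_max_sub_zero_eq hnN h₀ h₁]

theorem convexOn_linearInterpolation (N : ℕ)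
    (hc : ∀ k, k + 2 ≤ N → 2 * c (k + 1) ≤ c k + c (k + 2)) :
    ConvexOn ℝ (Set.Icc (0 : ℝ) N) (linearInterpolation c) := by
  have hs : Convex ℝ (Set.Icc (0 : ℝ) N) := convex_Icc _ _
  have hinges := convexOn_finset_sum hs (t := range (N - 1)) fun k hk =>
    (convexOn_max_sub_zero hs ((k : ℝ) + 1)).smul
      (sub_nonneg.2 (hc k (by have := mem_range.1 hk; omega)))
  refine ((convexOn_chord c hs 0).add hinges).congr fun x hx => ?_
  rw [linearInterpolation_eq_chord_zero_add_sum c hx]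
  rfl

end Interpolation

theorem Nat.choose_mul_choose_sub_comm (K a i : ℕ) :
    K.choose i * (K - i).choose a = K.choose a * (K - a).choose i := by
  have h₁ := Nat.choose_mul (n := K) (k := a + i) (s := i) (Nat.le_add_left i a)
  have h₂ := Nat.choose_mul (n := K) (k := a + i) (s := a) (Nat.le_add_right a i)
  rw [Nat.add_sub_cancel] at h₁
  rw [Nat.add_sub_cancel_left, Nat.choose_symm_add] at h₂
  rw [← h₁, h₂]

theorem Nat.two_mul_choose_succ_le (m i : ℕ) :
    2 * (m + 1).choose i ≤ m.choose i + (m + 2).choose i := by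
  cases i with
  | zero => simp
  | succ j =>
    have h₁ : (m + 1).choose (j + 1) = m.choose j + m.choose (j + 1) :=
      Nat.choose_succ_succ' m j
    have h₂ : (m + 2).choose (j + 1) = (m + 1).choose j + (m + 1).choose (j + 1) :=
      Nat.choose_succ_succ' (m + 1) j
    have := Nat.choose_le_choose j (Nat.le_add_right m 1)
    omega

theorem choose_sub_div_choose {K i n : ℕ} (hi : i ≤ K) (hn : n ≤ K) :
    ((K - i).choose n : ℝ) / K.choose n = (K - n).choose i / K.choose i := by
  have hKn : (K.choose n : ℝ) ≠ 0 := by exact_mod_cast (Nat.choose_pos hn).ne'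
  have hKi : (K.choose i : ℝ) ≠ 0 := by exact_mod_cast (Nat.choose_pos hi).ne'
  rw [div_eq_div_iff hKn hKi]
  norm_cast
  rw [mul_comm, Nat.choose_mul_choose_sub_comm, mul_comm]

theorem choose_sub_div_choose_convex {K i k : ℕ} (hi : i ≤ K) (hk : k + 2 ≤ K) :
    2 * (((K - i).choose (k + 1) : ℝ) / K.choose (k + 1)) ≤
      ((K - i).choose k : ℝ) / K.choose k + ((K - i).choose (k + 2) : ℝ) / K.choose (k + 2) := by
  obtain ⟨m, rfl⟩ := Nat.exists_eq_add_of_le' hk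
  rw [choose_sub_div_choose hi (by omega), choose_sub_div_choose hi (by omega),
    choose_sub_div_choose hi (by omega), mul_div_assoc', ← add_div,
    div_le_div_iff_of_pos_right (by exact_mod_cast Nat.choose_pos hi)]
  have h := Nat.two_mul_choose_succ_le m i
  rw [show m + (k + 2) - (k + 1) = m + 1 by omega, show m + (k + 2) - k = m + 2 by omega,
    show m + (k + 2) - (k + 2) = m by omega]
  exact_mod_cast h.trans_eq (add_comm _ _)

theorem stmt17 (K i : ℕ) (hK : 2 ≤ K) (hi : i = 1 ∨ i = 2) :
    ConvexOn ℝ (Set.Icc (0 : ℝ) K)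
      (fun x : ℝ =>
        (1 - x + (⌊x⌋ : ℝ)) *
            (((K - i).choose ⌊x⌋.toNat : ℝ) / (K.choose ⌊x⌋.toNat))
          + (x - (⌊x⌋ : ℝ)) *
            (((K - i).choose (⌊x⌋.toNat + 1) : ℝ) / (K.choose (⌊x⌋.toNat + 1)))) := by
  have hiK : i ≤ K := by omega
  exact convexOn_linearInterpolation (fun n => ((K - i).choose n : ℝ) / K.choose n) K
    fun _ hk => choose_sub_div_choose_convex hiK hk
end
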